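/- arXiv:1607.08640 — 2 statements merged into one kernel-verified Lean document; each statement's English description precedes it below -/
import Mathlib

section
/- If H^∞_v(G) is normed and nontrivial and the closure of E_v in ℂ is a compact subset of G (with G ≠ ℂ), then H^∞_v(G) is not a Banach space. -/
/-!
Pick `b ∈ ∂G`; it lies at positive distance `r` from `K = closure {v > 0}`. For `a ∈ G` with
`|a - b| < r`, expanding `(z - a)⁻¹` in powers of `(a - b) / (z - b)` gives functions holomorphic on
`G` (their only pole is `b ∉ G`) converging to `(z - a)⁻¹` uniformly on `K`. Multiplied by a fixed
`f ∈ H^∞_v(G)` they form a `‖·‖_v`-Cauchy sequence; its limit `g` in `H^∞_v(G)` would satisfy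
`(z - a) g = f` where `v > 0`, hence on all of `G` by the identity theorem, so `f (a) = 0`. Thus `f`
vanishes on the nonempty open set `G ∩ B(b, r)`, so `f = 0`.
-/

open Complex Metric Set Filter Topology MeasureTheory

noncomputable section

/-- `f` is holomorphic on `G` and `sup_{z in G} v z * |f z| < ∞`. -/
def MemHv (G : Set ℂ) (v : ℂ → ℝ) (f : ℂ → ℂ) : Prop :=
  DifferentiableOn ℂ f G ∧ ∃ C : ℝ, ∀ z ∈ G, v z * ‖f z‖ ≤ C

/-- The weighted sup-seminorm `‖f‖_v`. -/
def HvNorm (G : Set ℂ) (v : ℂ → ℝ) (f : ℂ → ℂ) : ℝ :=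
  sSup ((fun z => v z * ‖f z‖) '' G)

/-- A `‖·‖_v`-Cauchy sequence. -/
def HvCauchy (G : Set ℂ) (v : ℂ → ℝ) (F : ℕ → ℂ → ℂ) : Prop :=
  ∀ ε : ℝ, 0 < ε → ∃ N : ℕ, ∀ m ≥ N, ∀ n ≥ N, ∀ z ∈ G,
    v z * ‖F m z - F n z‖ ≤ ε

/-- Convergence in the `‖·‖_v`-seminorm. -/
def HvTendsto (G : Set ℂ) (v : ℂ → ℝ) (F : ℕ → ℂ → ℂ) (f : ℂ → ℂ) : Prop :=
  ∀ ε : ℝ, 0 < ε → ∃ N : ℕ, ∀ n ≥ N, ∀ z ∈ G,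
    v z * ‖F n z - f z‖ ≤ ε

/-- Completeness of `H^∞_v(G)`: every Cauchy sequence converges in the space. -/
def HvComplete (G : Set ℂ) (v : ℂ → ℝ) : Prop :=
  ∀ F : ℕ → ℂ → ℂ, (∀ n, MemHv G v (F n)) → HvCauchy G v F →
    ∃ f : ℂ → ℂ, MemHv G v f ∧ HvTendsto G v F f

/-- The seminorm `‖·‖_v` is a norm: `‖f‖_v = 0` forces `f = 0` on `G`. -/
def HvNormed (G : Set ℂ) (v : ℂ → ℝ) : Prop :=
  ∀ f : ℂ → ℂ, MemHv G v f → (∀ z ∈ G, v z * ‖f z‖ = 0) →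
    ∀ z ∈ G, f z = 0

/-- `H^∞_v(G)` is a Banach space. -/
def IsBanachHv (G : Set ℂ) (v : ℂ → ℝ) : Prop :=
  HvNormed G v ∧ HvComplete G v

section Weighted

variable {G : Set ℂ} {v : ℂ → ℝ}

theorem HvTendsto.hvCauchy (hv : ∀ z ∈ G, 0 ≤ v z) {F : ℕ → ℂ → ℂ} {f : ℂ → ℂ}
    (hF : HvTendsto G v F f) : HvCauchy G v F := by
  intro ε hε
  obtain ⟨N, hN⟩ := hF (ε / 2) (half_pos hε)
  refine ⟨N, fun m hm n hn z hz => ?_⟩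
  calc v z * ‖F m z - F n z‖
      ≤ v z * (‖F m z - f z‖ + ‖F n z - f z‖) :=
        mul_le_mul_of_nonneg_left (norm_sub_le_norm_sub_add_norm_sub _ _ _ |>.trans
          (by rw [norm_sub_rev (f z)])) (hv z hz)
    _ ≤ ε / 2 + ε / 2 := by rw [mul_add]; exact add_le_add (hN m hm z hz) (hN n hn z hz)
    _ = ε := add_halves ε

theorem HvTendsto.tendsto_apply {F : ℕ → ℂ → ℂ} {f : ℂ → ℂ} (hF : HvTendsto G v F f)
    {z : ℂ} (hz : z ∈ G) (hvz : 0 < v z) : Tendsto (fun n => F n z) atTop (𝓝 (f z)) := by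
  rw [Metric.tendsto_atTop]
  intro ε hε
  obtain ⟨N, hN⟩ := hF (v z * (ε / 2)) (by positivity)
  refine ⟨N, fun n hn => ?_⟩
  rw [dist_eq_norm]
  have := le_of_mul_le_mul_left (hN n hn z hz) hvz
  linarith

theorem HvTendsto.apply_eq_of_pos {F : ℕ → ℂ → ℂ} {f g : ℂ → ℂ} (hf : HvTendsto G v F f)
    (hg : HvTendsto G v F g) {z : ℂ} (hz : z ∈ G) (hvz : 0 < v z) : f z = g z :=
  tendsto_nhds_unique (hf.tendsto_apply hz hvz) (hg.tendsto_apply hz hvz)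

theorem memHv_mul (hv : ∀ z ∈ G, 0 ≤ v z) {f S : ℂ → ℂ} (hf : MemHv G v f)
    (hS : DifferentiableOn ℂ S G) {M : ℝ} (hM : ∀ z ∈ G, 0 < v z → ‖S z‖ ≤ M) :
    MemHv G v (fun z => f z * S z) := by
  obtain ⟨C, hC⟩ := hf.2
  refine ⟨hf.1.mul hS, max C 0 * max M 0, fun z hz => ?_⟩
  rcases (hv z hz).eq_or_lt with hvz | hvz
  · rw [← hvz, zero_mul]
    positivity
  calc v z * ‖f z * S z‖ = v z * ‖f z‖ * ‖S z‖ := by rw [norm_mul, mul_assoc]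
    _ ≤ max C 0 * max M 0 :=
      mul_le_mul ((hC z hz).trans (le_max_left _ _)) ((hM z hz hvz).trans (le_max_left _ _))
        (norm_nonneg _) (le_max_right _ _)

theorem hvTendsto_mul_of_tendstoUniformlyOn (hv : ∀ z ∈ G, 0 ≤ v z) {f : ℂ → ℂ} {C : ℝ}
    (hf : ∀ z ∈ G, v z * ‖f z‖ ≤ C) {S : ℕ → ℂ → ℂ} {s : ℂ → ℂ}
    (hS : TendstoUniformlyOn S s atTop {w ∈ G | 0 < v w}) :
    HvTendsto G v (fun n z => f z * S n z) (fun z => f z * s z) := by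
  intro ε hε
  set C' := max C 0 + 1
  have hC' : 0 < C' := by positivity
  obtain ⟨N, hN⟩ :=
    eventually_atTop.mp (Metric.tendstoUniformlyOn_iff.mp hS (ε / C') (by positivity))
  refine ⟨N, fun n hn z hz => ?_⟩
  rcases (hv z hz).eq_or_lt with hvz | hvz
  · rw [← hvz, zero_mul]
    exact hε.le
  have hdist := hN n hn z ⟨hz, hvz⟩
  rw [dist_eq_norm, norm_sub_rev] at hdist
  calc v z * ‖f z * S n z - f z * s z‖ = v z * ‖f z‖ * ‖S n z - s z‖ := by
        rw [← mul_sub, norm_mul, mul_assoc]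
    _ ≤ C' * (ε / C') :=
      mul_le_mul ((hf z hz).trans (by simp only [C']; linarith [le_max_left C 0])) hdist.le
        (norm_nonneg _) hC'.le
    _ = ε := mul_div_cancel₀ ε hC'.ne'

end Weighted

section InvSubExpansion

/-- Partial sums of the expansion `(z - a)⁻¹ = ∑ (a - b) ^ k / (z - b) ^ (k + 1)` around `b`,
valid for `‖a - b‖ < ‖z - b‖`. -/
def invSubPartialSum (a b : ℂ) (n : ℕ) (z : ℂ) : ℂ :=
  ∑ k ∈ Finset.range n, (a - b) ^ k / (z - b) ^ (k + 1)

variable {a b : ℂ}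

theorem differentiableOn_invSubPartialSum {G : Set ℂ} (hb : b ∉ G) (n : ℕ) :
    DifferentiableOn ℂ (invSubPartialSum a b n) G := by
  refine DifferentiableOn.fun_sum fun k _ => (differentiableOn_const _).div
    ((differentiableOn_id.sub_const b).pow _) fun z hz => pow_ne_zero _ (sub_ne_zero.mpr ?_)
  rintro rfl
  exact hb hz

theorem norm_div_pow_le {r : ℝ} (hr : 0 < r) {z : ℂ} (hz : r ≤ ‖z - b‖) (k : ℕ) :
    ‖(a - b) ^ k / (z - b) ^ (k + 1)‖ ≤ ‖a - b‖ ^ k / r ^ (k + 1) := by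
  rw [norm_div, norm_pow, norm_pow]
  gcongr

theorem summable_pow_div_pow {r : ℝ} (hr : ‖a - b‖ < r) :
    Summable fun k : ℕ => ‖a - b‖ ^ k / r ^ (k + 1) := by
  have hr0 : 0 < r := (norm_nonneg _).trans_lt hr
  have hq : ‖a - b‖ / r < 1 := (div_lt_one hr0).mpr hr
  refine ((summable_geometric_of_lt_one (by positivity) hq).div_const r).congr fun k => ?_
  rw [div_pow, pow_succ, div_div]

theorem hasSum_div_pow_inv_sub {z : ℂ} (hz : ‖a - b‖ < ‖z - b‖) :
    HasSum (fun k : ℕ => (a - b) ^ k / (z - b) ^ (k + 1)) (z - a)⁻¹ := by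
  have hzb : z - b ≠ 0 := norm_pos_iff.mp ((norm_nonneg _).trans_lt hz)
  have hw : ‖(a - b) / (z - b)‖ < 1 := by
    rw [norm_div]
    exact (div_lt_one (norm_pos_iff.mpr hzb)).mpr hz
  have hterm : ∀ k : ℕ, (a - b) ^ k / (z - b) ^ (k + 1) = (z - b)⁻¹ * ((a - b) / (z - b)) ^ k :=
    fun k => by rw [div_pow, pow_succ, div_mul_eq_div_div, div_eq_inv_mul]
  have hlim : (z - a)⁻¹ = (z - b)⁻¹ * (1 - (a - b) / (z - b))⁻¹ := by
    rw [← mul_inv, mul_sub, mul_one, mul_div_cancel₀ _ hzb, sub_sub_sub_cancel_right]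
  simpa only [hterm, hlim] using (hasSum_geometric_of_norm_lt_one hw).mul_left (z - b)⁻¹

theorem tendstoUniformlyOn_invSubPartialSum {r : ℝ} (hr : ‖a - b‖ < r) :
    TendstoUniformlyOn (invSubPartialSum a b) (fun z => (z - a)⁻¹) atTop {z | r ≤ ‖z - b‖} := by
  have hr0 : 0 < r := (norm_nonneg _).trans_lt hr
  refine (tendstoUniformlyOn_tsum_nat (summable_pow_div_pow hr)
    fun k z hz => norm_div_pow_le hr0 hz k).congr_right fun z hz => ?_
  exact (hasSum_div_pow_inv_sub (hr.trans_le hz)).tsum_eq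

theorem norm_invSubPartialSum_le {r : ℝ} (hr : ‖a - b‖ < r) {z : ℂ} (hz : r ≤ ‖z - b‖) (n : ℕ) :
    ‖invSubPartialSum a b n z‖ ≤ ∑' k : ℕ, ‖a - b‖ ^ k / r ^ (k + 1) := by
  have hr0 : 0 < r := (norm_nonneg _).trans_lt hr
  calc ‖invSubPartialSum a b n z‖ ≤ ∑ k ∈ Finset.range n, ‖a - b‖ ^ k / r ^ (k + 1) :=
        (norm_sum_le _ _).trans (Finset.sum_le_sum fun k _ => norm_div_pow_le hr0 hz k)
    _ ≤ _ := (summable_pow_div_pow hr).sum_le_tsum _ fun k _ => by positivity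

end InvSubExpansion

theorem HvComplete.eq_zero_of_norm_sub_lt {G : Set ℂ} {v : ℂ → ℝ} (hcompl : HvComplete G v)
    (hG : IsOpen G) (hGc : IsPreconnected G) (hv : ∀ z ∈ G, 0 ≤ v z) {z₀ : ℂ} (hz₀ : z₀ ∈ G)
    (hacc : AccPt z₀ (𝓟 {w ∈ G | 0 < v w})) {b : ℂ} (hb : b ∉ G) {r : ℝ}
    (hr : ∀ z ∈ G, 0 < v z → r ≤ ‖z - b‖) {f : ℂ → ℂ} (hf : MemHv G v f) {a : ℂ} (ha : a ∈ G)
    (hab : ‖a - b‖ < r) : f a = 0 := by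
  obtain ⟨C, hC⟩ := hf.2
  have hS : TendstoUniformlyOn (invSubPartialSum a b) (fun z => (z - a)⁻¹) atTop
      {w ∈ G | 0 < v w} :=
    (tendstoUniformlyOn_invSubPartialSum hab).mono fun z hz => hr z hz.1 hz.2
  have hlim := hvTendsto_mul_of_tendstoUniformlyOn hv hC hS
  have hmem : ∀ n, MemHv G v (fun z => f z * invSubPartialSum a b n z) := fun n =>
    memHv_mul hv hf (differentiableOn_invSubPartialSum hb n)
      fun z hz hvz => norm_invSubPartialSum_le hab (hr z hz hvz) n
  obtain ⟨g, hg, hFg⟩ := hcompl _ hmem (hlim.hvCauchy hv)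
  have hgf : EqOn (fun z => (z - a) * g z) f G := by
    refine AnalyticOnNhd.eqOn_of_preconnected_of_frequently_eq
      (((differentiableOn_id.sub_const a).mul hg.1).analyticOnNhd hG) (hf.1.analyticOnNhd hG) hGc
      hz₀ ((accPt_iff_frequently_nhdsNE.mp hacc).mono fun z ⟨hz, hvz⟩ => ?_)
    have hza : z - a ≠ 0 := fun h => by
      have := hr z hz hvz
      rw [sub_eq_zero.mp h] at this
      linarith
    rw [hFg.apply_eq_of_pos hlim hz hvz, mul_left_comm, mul_inv_cancel₀ hza, mul_one]
  simpa using (hgf ha).symm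

theorem stmt11_general (G : Set ℂ) (v : ℂ → ℝ) (hG : IsOpen G) (hGc : IsConnected G)
    (hv : ∀ z ∈ G, 0 ≤ v z) (hGne : G ≠ Set.univ)
    (hacc : ∃ z ∈ G, AccPt z (𝓟 {w ∈ G | 0 < v w}))
    (hne : ∃ f : ℂ → ℂ, MemHv G v f ∧ ∃ z ∈ G, f z ≠ 0)
    (hsub : closure {w ∈ G | 0 < v w} ⊆ G) :
    ¬ HvComplete G v := by
  intro hcompl
  obtain ⟨f, hf, z₁, hz₁, hfz₁⟩ := hne
  obtain ⟨z₀, hz₀, hz₀acc⟩ := hacc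
  set K := closure {w ∈ G | 0 < v w}
  obtain ⟨b, hbfr⟩ : (frontier G).Nonempty := nonempty_frontier_iff.mpr ⟨hGc.nonempty, hGne⟩
  rw [hG.frontier_eq] at hbfr
  obtain ⟨e, he⟩ := (accPt_iff_frequently_nhdsNE.mp hz₀acc).exists
  have hr : 0 < infDist b K :=
    (isClosed_closure.notMem_iff_infDist_pos ⟨e, subset_closure he⟩).mp fun h => hbfr.2 (hsub h)
  have hK : ∀ z ∈ G, 0 < v z → infDist b K ≤ ‖z - b‖ := fun z hz hvz => by
    rw [← dist_eq_norm, dist_comm]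
    exact infDist_le_dist_of_mem (subset_closure ⟨hz, hvz⟩)
  have hf_ball : ∀ a ∈ ball b (infDist b K) ∩ G, f a = 0 := fun a ⟨hab, ha⟩ =>
    hcompl.eq_zero_of_norm_sub_lt hG hGc.isPreconnected hv hz₀ hz₀acc hbfr.2 hK hf ha
      (by rwa [mem_ball, dist_eq_norm] at hab)
  obtain ⟨a₀, ha₀⟩ := mem_closure_iff.mp hbfr.1 _ isOpen_ball (mem_ball_self hr)
  have hf_zero : EqOn f 0 G :=
    (hf.1.analyticOnNhd hG).eqOn_zero_of_preconnected_of_eventuallyEq_zero hGc.isPreconnected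
      ha₀.2 (mem_of_superset ((isOpen_ball.inter hG).mem_nhds ha₀) fun z hz => hf_ball z hz)
  exact hfz₁ (hf_zero hz₁)

theorem stmt11 (G : Set ℂ) (v : ℂ → ℝ) (hG : IsOpen G) (hGc : IsConnected G)
    (hv : ∀ z ∈ G, 0 ≤ v z) (hGne : G ≠ Set.univ)
    (hacc : ∃ z ∈ G, AccPt z (𝓟 {w ∈ G | 0 < v w}))
    (hne : ∃ f : ℂ → ℂ, MemHv G v f ∧ ∃ z ∈ G, f z ≠ 0)
    (hcomp : IsCompact (closure {w ∈ G | 0 < v w}))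
    (hsub : closure {w ∈ G | 0 < v w} ⊆ G) :
    ¬ HvComplete G v :=
  stmt11_general G v hG hGc hv hGne hacc hne hsub
end
end

section
/- If v is a continuous weight on G whose zero set G \ E_v is discrete in G, then H^∞_v(G) is a Banach space. -/
open Complex Metric Set Filter Topology MeasureTheory

noncomputable section

/-! Near every point `z ∈ G` the weight `v` vanishes at most at `z` itself, so every small circle
around `z` lies in `{v > 0}` and, by compactness, `v ≥ c > 0` on it. By the maximum modulus
principle a `‖·‖_v`-Cauchy sequence is then uniformly Cauchy on the closed disk bounded by that
circle, so it converges locally uniformly on `G` to a holomorphic function, which is its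
`‖·‖_v`-limit. If `‖f‖_v = 0`, then `f` vanishes where `v` does not, i.e. on a punctured
neighbourhood of each point, hence everywhere by continuity. -/

section

variable {G : Set ℂ} {v : ℂ → ℝ} {z : ℂ}

lemma eventually_mem_and_weight_ne_zero (hGz : G ∈ 𝓝 z)
    (hz : ¬ AccPt z (𝓟 {w ∈ G | v w = 0})) : ∀ᶠ w in 𝓝[≠] z, w ∈ G ∧ v w ≠ 0 := by
  rw [accPt_iff_frequently_nhdsNE, not_frequently] at hz
  filter_upwards [hz, mem_nhdsWithin_of_mem_nhds hGz] with w hw hwG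
  exact ⟨hwG, fun h => hw ⟨hwG, h⟩⟩

theorem hvNormed_of_not_accPt (hG : IsOpen G)
    (hdisc : ∀ z ∈ G, ¬ AccPt z (𝓟 {w ∈ G | v w = 0})) : HvNormed G v := by
  intro f hf hzero z hz
  have hfz : ContinuousAt f z := (hf.1.differentiableAt (hG.mem_nhds hz)).continuousAt
  have hpunct : f =ᶠ[𝓝[≠] z] 0 := by
    filter_upwards [eventually_mem_and_weight_ne_zero (hG.mem_nhds hz) (hdisc z hz)]
      with w ⟨hwG, hvw⟩
    simpa [hvw] using hzero w hwG
  exact ((hfz.eventuallyEq_nhds_iff_eventuallyEq_nhdsNE continuousAt_const).1 hpunct).eq_of_nhds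

lemma exists_closedBall_subset_weight_ge_on_sphere (hG : IsOpen G) (hv : ∀ z ∈ G, 0 ≤ v z)
    (hvc : ContinuousOn v G) (hz : z ∈ G) (hzacc : ¬ AccPt z (𝓟 {w ∈ G | v w = 0})) :
    ∃ r > 0, closedBall z r ⊆ G ∧ ∃ c > 0, ∀ x ∈ sphere z r, c ≤ v x := by
  obtain ⟨R, hR, hball⟩ := Metric.mem_nhdsWithin_iff.1
    (eventually_mem_and_weight_ne_zero (hG.mem_nhds hz) hzacc)
  have hpunct : ∀ w ∈ closedBall z (R / 2), w ≠ z → w ∈ G ∧ v w ≠ 0 := fun w hw hwz =>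
    hball ⟨closedBall_subset_ball (half_lt_self hR) hw, hwz⟩
  have hsub : closedBall z (R / 2) ⊆ G := fun w hw => by
    rcases eq_or_ne w z with rfl | hwz
    exacts [hz, (hpunct w hw hwz).1]
  have hpos : ∀ x ∈ sphere z (R / 2), 0 < v x := fun x hx =>
    have hxz : x ≠ z := ne_of_mem_sphere hx (half_pos hR).ne'
    (hv x (hsub (sphere_subset_closedBall hx))).lt_of_ne
      (hpunct x (sphere_subset_closedBall hx) hxz).2.symm
  obtain ⟨x₀, hx₀, hmin⟩ := (isCompact_sphere z (R / 2)).exists_isMinOn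
    (NormedSpace.sphere_nonempty.2 (half_pos hR).le)
    (hvc.mono (sphere_subset_closedBall.trans hsub))
  exact ⟨R / 2, half_pos hR, hsub, v x₀, hpos x₀ hx₀, fun x hx => hmin hx⟩

lemma norm_le_div_of_weight_mul_norm_le_on_sphere {g : ℂ → ℂ} {r c ε : ℝ} (hr : 0 < r)
    (hg : DifferentiableOn ℂ g (closedBall z r)) (hc : 0 < c)
    (hcv : ∀ x ∈ sphere z r, c ≤ v x) (hgv : ∀ x ∈ sphere z r, v x * ‖g x‖ ≤ ε)
    {w : ℂ} (hw : w ∈ closedBall z r) : ‖g w‖ ≤ ε / c := by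
  refine Complex.norm_le_of_forall_mem_frontier_norm_le isBounded_ball
    (hg.diffContOnCl_ball subset_rfl) (fun x hx => ?_) (by rwa [closure_ball z hr.ne'])
  rw [frontier_ball z hr.ne'] at hx
  rw [le_div_iff₀ hc, mul_comm]
  exact (mul_le_mul_of_nonneg_right (hcv x hx) (norm_nonneg _)).trans (hgv x hx)

variable {F : ℕ → ℂ → ℂ}

lemma HvCauchy.exists_uniformCauchySeqOn_closedBall (hFc : HvCauchy G v F)
    (hF : ∀ n, DifferentiableOn ℂ (F n) G) (hG : IsOpen G) (hv : ∀ z ∈ G, 0 ≤ v z)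
    (hvc : ContinuousOn v G) (hz : z ∈ G) (hzacc : ¬ AccPt z (𝓟 {w ∈ G | v w = 0})) :
    ∃ r > 0, closedBall z r ⊆ G ∧ UniformCauchySeqOn F atTop (closedBall z r) := by
  obtain ⟨r, hr, hsub, c, hc, hcv⟩ :=
    exists_closedBall_subset_weight_ge_on_sphere hG hv hvc hz hzacc
  refine ⟨r, hr, hsub, Metric.uniformCauchySeqOn_iff.2 fun ε hε => ?_⟩
  obtain ⟨N, hN⟩ := hFc (ε / 2 * c) (by positivity)
  refine ⟨N, fun m hm n hn w hw => ?_⟩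
  have hmn : ‖F m w - F n w‖ ≤ ε / 2 * c / c :=
    norm_le_div_of_weight_mul_norm_le_on_sphere hr (((hF m).sub (hF n)).mono hsub) hc hcv
      (fun x hx => hN m hm n hn x (hsub (sphere_subset_closedBall hx))) hw
  rw [mul_div_cancel_right₀ _ hc.ne'] at hmn
  exact (dist_eq_norm _ _).trans_lt (hmn.trans_lt (half_lt_self hε))

lemma HvCauchy.exists_tendstoLocallyUniformlyOn (hFc : HvCauchy G v F)
    (hF : ∀ n, DifferentiableOn ℂ (F n) G) (hG : IsOpen G) (hv : ∀ z ∈ G, 0 ≤ v z)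
    (hvc : ContinuousOn v G) (hdisc : ∀ z ∈ G, ¬ AccPt z (𝓟 {w ∈ G | v w = 0})) :
    ∃ f : ℂ → ℂ, TendstoLocallyUniformlyOn F f atTop G := by
  refine ⟨fun z => limUnder atTop (F · z), tendstoLocallyUniformlyOn_of_forall_exists_nhds ?_⟩
  intro z hz
  obtain ⟨r, hr, -, hu⟩ := hFc.exists_uniformCauchySeqOn_closedBall hF hG hv hvc hz (hdisc z hz)
  exact ⟨closedBall z r, mem_nhdsWithin_of_mem_nhds (closedBall_mem_nhds z hr),
    hu.tendstoUniformlyOn_of_tendsto fun x hx => (hu.cauchySeq hx).tendsto_limUnder⟩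

lemma HvCauchy.hvTendsto_of_tendsto {f : ℂ → ℂ} (hFc : HvCauchy G v F)
    (hlim : ∀ z ∈ G, Tendsto (F · z) atTop (𝓝 (f z))) : HvTendsto G v F f := by
  intro ε hε
  obtain ⟨N, hN⟩ := hFc ε hε
  refine ⟨N, fun n hn z hz => ?_⟩
  have hmn : Tendsto (fun m => v z * ‖F n z - F m z‖) atTop (𝓝 (v z * ‖F n z - f z‖)) :=
    ((tendsto_const_nhds.sub (hlim z hz)).norm).const_mul _
  exact le_of_tendsto hmn (eventually_atTop.2 ⟨N, fun m hm => hN n hn m hm z hz⟩)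

lemma HvTendsto.exists_weight_mul_norm_le {f : ℂ → ℂ} (hFf : HvTendsto G v F f)
    (hF : ∀ n, MemHv G v (F n)) (hv : ∀ z ∈ G, 0 ≤ v z) :
    ∃ C, ∀ z ∈ G, v z * ‖f z‖ ≤ C := by
  obtain ⟨N, hN⟩ := hFf 1 one_pos
  obtain ⟨-, C, hC⟩ := hF N
  refine ⟨C + 1, fun z hz => ?_⟩
  calc v z * ‖f z‖ ≤ v z * (‖F N z‖ + ‖F N z - f z‖) :=
        mul_le_mul_of_nonneg_left (norm_le_norm_add_norm_sub _ _) (hv z hz)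
    _ = v z * ‖F N z‖ + v z * ‖F N z - f z‖ := mul_add _ _ _
    _ ≤ C + 1 := add_le_add (hC z hz) (hN N le_rfl z hz)

theorem hvComplete_of_not_accPt (hG : IsOpen G) (hv : ∀ z ∈ G, 0 ≤ v z)
    (hvc : ContinuousOn v G) (hdisc : ∀ z ∈ G, ¬ AccPt z (𝓟 {w ∈ G | v w = 0})) :
    HvComplete G v := by
  intro F hF hFc
  have hFd : ∀ n, DifferentiableOn ℂ (F n) G := fun n => (hF n).1
  obtain ⟨f, hf⟩ := hFc.exists_tendstoLocallyUniformlyOn hFd hG hv hvc hdisc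
  have hFf : HvTendsto G v F f := hFc.hvTendsto_of_tendsto fun z hz => hf.tendsto_at hz
  exact ⟨f, ⟨hf.differentiableOn (.of_forall hFd) hG, hFf.exists_weight_mul_norm_le hF hv⟩, hFf⟩

end

theorem stmt14_general (G : Set ℂ) (v : ℂ → ℝ) (hG : IsOpen G)
    (hv : ∀ z ∈ G, 0 ≤ v z) (hvc : ContinuousOn v G)
    (hdisc : ∀ z ∈ G, ¬ AccPt z (𝓟 {w ∈ G | v w = 0})) :
    IsBanachHv G v :=
  ⟨hvNormed_of_not_accPt hG hdisc, hvComplete_of_not_accPt hG hv hvc hdisc⟩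

theorem stmt14 (G : Set ℂ) (v : ℂ → ℝ) (hG : IsOpen G) (hGc : IsConnected G)
    (hv : ∀ z ∈ G, 0 ≤ v z) (hvc : ContinuousOn v G)
    (hdisc : ∀ z ∈ G, ¬ AccPt z (𝓟 {w ∈ G | v w = 0})) :
    IsBanachHv G v :=
  stmt14_general G v hG hv hvc hdisc
end
end
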